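/- arXiv:2407.12691 — 9 statements merged into one kernel-verified Lean document; each statement's English description precedes it below -/
import Mathlib

section
/- For a Conway operator on a Cartesian differential category, the following are equivalent: (i) the differential-fixpoint rule D[fix(f)] = π₂ ∘ fix(T(f)∘c); (ii) the tangent-fixpoint rule T(fix(f)) = fix(T(f)∘c); (iii) the strong differential-fixpoint rule D[fix(f)] = fix( D[f] ∘ ⟨π₁, fix(f)∘π₁, π₂, π₃⟩ ). -/
/-! Over the parameter `(a, a')`, the system `T(f) ∘ c` is
`(x, x') ↦ (f(a, x), D[f]((a, x), (a', x')))`, whose first equation does not involve `x'`.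
Bekič's axiom therefore solves it in two stages: the first component of `fix(T(f) ∘ c)` is
`fix(f) ∘ π₁` and the second is the fixpoint `fix(D[f] ∘ ⟨π₁, fix(f) ∘ π₁, π₂, π₃⟩)` of the
strong rule. Since `T(fix f) = ⟨fix(f) ∘ π₁, D[fix f]⟩`, each of the three rules then says
that `D[fix f]` equals this second component. -/

open CategoryTheory CategoryTheory.Limits

universe v u

variable (C : Type u) [Category.{v} C] [HasFiniteProducts C]

/-- Cartesian left additive category: hom-sets are commutative monoids,
precomposition is additive, and the projections are additive maps. -/
class CartesianLeftAdditive [∀ A B : C, AddCommMonoid (A ⟶ B)] : Prop where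
  comp_add : ∀ {X A B : C} (x : X ⟶ A) (f g : A ⟶ B), x ≫ (f + g) = x ≫ f + x ≫ g
  comp_zero : ∀ {X A B : C} (x : X ⟶ A), x ≫ (0 : A ⟶ B) = 0
  add_comp_fst : ∀ {X A B : C} (x y : X ⟶ A ⨯ B),
    (x + y) ≫ (prod.fst : A ⨯ B ⟶ A) = x ≫ prod.fst + y ≫ prod.fst
  add_comp_snd : ∀ {X A B : C} (x y : X ⟶ A ⨯ B),
    (x + y) ≫ (prod.snd : A ⨯ B ⟶ B) = x ≫ prod.snd + y ≫ prod.snd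
  zero_comp_fst : ∀ {X A B : C}, (0 : X ⟶ A ⨯ B) ≫ (prod.fst : A ⨯ B ⟶ A) = 0
  zero_comp_snd : ∀ {X A B : C}, (0 : X ⟶ A ⨯ B) ≫ (prod.snd : A ⨯ B ⟶ B) = 0

/-- A differential combinator satisfying the axioms [CD.1]-[CD.7] of a
Cartesian differential category. -/
structure DiffComb [∀ A B : C, AddCommMonoid (A ⟶ B)] where
  D : ∀ {A B : C}, (A ⟶ B) → (A ⨯ A ⟶ B)
  cd1_zero : ∀ {A B : C}, D (0 : A ⟶ B) = 0
  cd1_add : ∀ {A B : C} (f g : A ⟶ B), D (f + g) = D f + D g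
  cd2_zero : ∀ {A B X : C} (f : A ⟶ B) (x : X ⟶ A), prod.lift x 0 ≫ D f = 0
  cd2_add : ∀ {A B X : C} (f : A ⟶ B) (x y z : X ⟶ A),
    prod.lift x (y + z) ≫ D f = prod.lift x y ≫ D f + prod.lift x z ≫ D f
  cd3_id : ∀ {A : C}, D (𝟙 A) = prod.snd
  cd3_fst : ∀ {A B : C},
    D (prod.fst : A ⨯ B ⟶ A) = (prod.snd : (A ⨯ B) ⨯ (A ⨯ B) ⟶ A ⨯ B) ≫ prod.fst
  cd3_snd : ∀ {A B : C},
    D (prod.snd : A ⨯ B ⟶ B) = (prod.snd : (A ⨯ B) ⨯ (A ⨯ B) ⟶ A ⨯ B) ≫ prod.snd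
  cd4 : ∀ {A B B' : C} (f : A ⟶ B) (g : A ⟶ B'), D (prod.lift f g) = prod.lift (D f) (D g)
  cd5 : ∀ {A B E : C} (f : A ⟶ B) (g : B ⟶ E), D (f ≫ g) = prod.lift (prod.fst ≫ f) (D f) ≫ D g
  cd6 : ∀ {A B X : C} (f : A ⟶ B) (x y z : X ⟶ A),
    prod.lift (prod.lift x y) (prod.lift 0 z) ≫ D (D f) = prod.lift x z ≫ D f
  cd7 : ∀ {A B X : C} (f : A ⟶ B) (x y z : X ⟶ A),
    prod.lift (prod.lift x y) (prod.lift z 0) ≫ D (D f) =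
      prod.lift (prod.lift x z) (prod.lift y 0) ≫ D (D f)

variable {C}

/-- The tangent bundle functor on maps: `T f = ⟨f ∘ π₁, D[f]⟩`. -/
noncomputable def DiffComb.T [∀ A B : C, AddCommMonoid (A ⟶ B)] (Dc : DiffComb C) {A B : C}
    (f : A ⟶ B) : A ⨯ A ⟶ B ⨯ B :=
  prod.lift (prod.fst ≫ f) (Dc.D f)

/-- The canonical middle-swap isomorphism `c = ⟨π₁,π₃,π₂,π₄⟩`. -/
noncomputable def cmap (A B X Y : C) : (A ⨯ B) ⨯ (X ⨯ Y) ⟶ (A ⨯ X) ⨯ (B ⨯ Y) :=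
  prod.lift (prod.map prod.fst prod.fst) (prod.map prod.snd prod.snd)

/-- A parametrized fixpoint operator. -/
structure ParamFix (C : Type u) [Category.{v} C] [HasFiniteProducts C] where
  fix : ∀ {A X : C}, (A ⨯ X ⟶ X) → (A ⟶ X)
  fix_eq : ∀ {A X : C} (f : A ⨯ X ⟶ X), prod.lift (𝟙 A) (fix f) ≫ f = fix f
  natural : ∀ {A B X : C} (g : A ⟶ B) (f : B ⨯ X ⟶ X),
    g ≫ fix f = fix (prod.map g (𝟙 X) ≫ f)

/-- The associativity map `(A ⨯ X) ⨯ Y ⟶ A ⨯ (X ⨯ Y)`. -/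
noncomputable def assoc3 (A X Y : C) : (A ⨯ X) ⨯ Y ⟶ A ⨯ (X ⨯ Y) :=
  prod.lift (prod.fst ≫ prod.fst) (prod.lift (prod.fst ≫ prod.snd) prod.snd)

/-- A Conway operator: a parametrized fixpoint operator satisfying
dinaturality and Bekič's axiom. -/
structure Conway (C : Type u) [Category.{v} C] [HasFiniteProducts C]
    extends ParamFix C where
  dinat : ∀ {A X Y : C} (f : A ⨯ X ⟶ Y) (g : Y ⟶ X),
    fix (f ≫ g) = fix (prod.map (𝟙 A) g ≫ f) ≫ g
  bekic : ∀ {A X Y : C} (f : A ⨯ (X ⨯ Y) ⟶ X) (g : A ⨯ (X ⨯ Y) ⟶ Y),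
    fix (prod.lift f g) =
      prod.lift
        (fix (prod.lift (𝟙 (A ⨯ X)) (fix (assoc3 A X Y ≫ g)) ≫ assoc3 A X Y ≫ f))
        (fix (prod.lift (prod.fst : A ⨯ Y ⟶ A)
          (prod.lift
            ((prod.fst : A ⨯ Y ⟶ A) ≫
              fix (prod.lift (𝟙 (A ⨯ X)) (fix (assoc3 A X Y ≫ g)) ≫ assoc3 A X Y ≫ f))
            (prod.snd : A ⨯ Y ⟶ Y)) ≫ g))

section
variable [∀ A B : C, AddCommMonoid (A ⟶ B)]

/-- The differential-fixpoint rule. -/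
def DiffFixRule (Dc : DiffComb C) (P : ParamFix C) : Prop :=
  ∀ {A X : C} (f : A ⨯ X ⟶ X),
    Dc.D (P.fix f) = P.fix (cmap A A X X ≫ Dc.T f) ≫ prod.snd

/-- The tangent-fixpoint rule. -/
def TangentFixRule (Dc : DiffComb C) (P : ParamFix C) : Prop :=
  ∀ {A X : C} (f : A ⨯ X ⟶ X),
    Dc.T (P.fix f) = P.fix (cmap A A X X ≫ Dc.T f)

/-- The strong differential-fixpoint rule. -/
def StrongDiffFixRule (Dc : DiffComb C) (P : ParamFix C) : Prop :=
  ∀ {A X : C} (f : A ⨯ X ⟶ X),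
    Dc.D (P.fix f) =
      P.fix (prod.lift
        (prod.lift ((prod.fst : (A ⨯ A) ⨯ X ⟶ A ⨯ A) ≫ prod.fst)
          ((prod.fst : (A ⨯ A) ⨯ X ⟶ A ⨯ A) ≫ prod.fst ≫ P.fix f))
        (prod.lift ((prod.fst : (A ⨯ A) ⨯ X ⟶ A ⨯ A) ≫ prod.snd)
          (prod.snd : (A ⨯ A) ⨯ X ⟶ X)) ≫ Dc.D f)

/-- The argument `⟨π₁, fix(f) ∘ π₁, π₂, π₃⟩` of `D[f]` in the strong differential-fixpoint rule. -/
noncomputable def strongFixArg (P : ParamFix C) {A X : C} (f : A ⨯ X ⟶ X) :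
    (A ⨯ A) ⨯ X ⟶ (A ⨯ X) ⨯ (A ⨯ X) :=
  prod.lift (prod.lift (prod.fst ≫ prod.fst) (prod.fst ≫ prod.fst ≫ P.fix f))
    (prod.lift (prod.fst ≫ prod.snd) prod.snd)

end

/-- Bekič's axiom for a system whose first equation does not involve the second variable. -/
lemma Conway.fix_lift_triangular (Cw : Conway C) {A X Y : C} (f : A ⨯ X ⟶ X)
    (g : A ⨯ (X ⨯ Y) ⟶ Y) :
    Cw.fix (prod.lift (prod.map (𝟙 A) prod.fst ≫ f) g) =
      prod.lift (Cw.fix f)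
        (Cw.fix (prod.lift prod.fst (prod.lift (prod.fst ≫ Cw.fix f) prod.snd) ≫ g)) := by
  have hfirst : ∀ m : A ⨯ X ⟶ Y,
      prod.lift (𝟙 (A ⨯ X)) m ≫ assoc3 A X Y ≫ prod.map (𝟙 A) prod.fst ≫ f = f := by
    intro m
    rw [← Category.assoc, ← Category.assoc]
    convert Category.id_comp f
    apply prod.hom_ext <;> simp [assoc3, prod.lift_fst, prod.lift_snd, prod.lift_fst_assoc]
  rw [Cw.bekic]
  simp only [hfirst]

section
variable [∀ A B : C, AddCommMonoid (A ⟶ B)]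

lemma cmap_comp_T (Dc : DiffComb C) {A X Y : C} (f : A ⨯ X ⟶ Y) :
    cmap A A X X ≫ Dc.T f =
      prod.lift (prod.map prod.fst prod.fst ≫ f) (cmap A A X X ≫ Dc.D f) := by
  apply prod.hom_ext <;> simp [cmap, DiffComb.T, prod.lift_fst, prod.lift_snd, prod.lift_fst_assoc]

lemma fix_cmap_comp_T (Dc : DiffComb C) (Cw : Conway C) {A X : C} (f : A ⨯ X ⟶ X) :
    Cw.fix (cmap A A X X ≫ Dc.T f) =
      prod.lift (prod.fst ≫ Cw.fix f) (Cw.fix (strongFixArg Cw.toParamFix f ≫ Dc.D f)) := by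
  have hmap : (prod.map prod.fst prod.fst : (A ⨯ A) ⨯ (X ⨯ X) ⟶ A ⨯ X) ≫ f =
      prod.map (𝟙 (A ⨯ A)) (prod.fst : X ⨯ X ⟶ X) ≫ prod.map prod.fst (𝟙 X) ≫ f := by
    rw [prod.map_map_assoc]
    simp
  have harg : prod.lift (prod.fst : (A ⨯ A) ⨯ X ⟶ A ⨯ A)
      (prod.lift (prod.fst ≫ prod.fst ≫ Cw.fix f) prod.snd) ≫
      cmap A A X X = strongFixArg Cw.toParamFix f := by
    apply prod.hom_ext <;> apply prod.hom_ext <;>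
      simp [cmap, strongFixArg, prod.lift_fst, prod.lift_snd]
  rw [cmap_comp_T, hmap, Cw.fix_lift_triangular, ← Cw.natural, ← Category.assoc, harg]

lemma diffFix_eq_iff (Dc : DiffComb C) (Cw : Conway C) {A X : C} (f : A ⨯ X ⟶ X) :
    Dc.D (Cw.fix f) = Cw.fix (cmap A A X X ≫ Dc.T f) ≫ prod.snd ↔
      Dc.D (Cw.fix f) = Cw.fix (strongFixArg Cw.toParamFix f ≫ Dc.D f) := by
  rw [fix_cmap_comp_T, prod.lift_snd]

lemma tangentFix_eq_iff (Dc : DiffComb C) (Cw : Conway C) {A X : C} (f : A ⨯ X ⟶ X) :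
    Dc.T (Cw.fix f) = Cw.fix (cmap A A X X ≫ Dc.T f) ↔
      Dc.D (Cw.fix f) = Cw.fix (strongFixArg Cw.toParamFix f ≫ Dc.D f) := by
  rw [fix_cmap_comp_T, DiffComb.T]
  refine ⟨fun h => ?_, fun h => by rw [h]⟩
  simpa only [prod.lift_snd] using congrArg (· ≫ prod.snd) h

theorem conway_rules_equivalent_general
    (Dc : DiffComb C) (Cw : Conway C) :
    (DiffFixRule Dc Cw.toParamFix ↔ TangentFixRule Dc Cw.toParamFix) ∧
    (TangentFixRule Dc Cw.toParamFix ↔ StrongDiffFixRule Dc Cw.toParamFix) := by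
  have hDS : DiffFixRule Dc Cw.toParamFix ↔ StrongDiffFixRule Dc Cw.toParamFix :=
    ⟨fun h _ _ f => (diffFix_eq_iff Dc Cw f).1 (h f),
      fun h _ _ f => (diffFix_eq_iff Dc Cw f).2 (h f)⟩
  have hTS : TangentFixRule Dc Cw.toParamFix ↔ StrongDiffFixRule Dc Cw.toParamFix :=
    ⟨fun h _ _ f => (tangentFix_eq_iff Dc Cw f).1 (h f),
      fun h _ _ f => (tangentFix_eq_iff Dc Cw f).2 (h f)⟩
  exact ⟨hDS.trans hTS.symm, hTS⟩

/-- for a Conway operator on a Cartesian differential category,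
the differential-fixpoint rule, the tangent-fixpoint rule and the strong
differential-fixpoint rule are all equivalent. -/
theorem conway_rules_equivalent [CartesianLeftAdditive C]
    (Dc : DiffComb C) (Cw : Conway C) :
    (DiffFixRule Dc Cw.toParamFix ↔ TangentFixRule Dc Cw.toParamFix) ∧
    (TangentFixRule Dc Cw.toParamFix ↔ StrongDiffFixRule Dc Cw.toParamFix) :=
  conway_rules_equivalent_general Dc Cw

end
end

section
/- In a traced Cartesian differential category (a Cartesian differential category with a Conway operator satisfying the differential-fixpoint rule), if f : A×X → X is linear (i.e. D[f] = f ∘ π₂), then its parametrized fixpoint fix(f) : A → X is also linear. -/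
open CategoryTheory CategoryTheory.Limits

universe v u

variable (C : Type u) [Category.{v} C] [HasFiniteProducts C]

variable {C}

/-! For linear `f` the tangent system `cmap ≫ T f` whose fixpoint gives `D[fix f]` decouples into
`f` acting on base points and `f` acting on tangent vectors. By Bekič's rule the tangent
component of the joint fixpoint is then the fixpoint of the second equation alone, which by
naturality is `π₂ ≫ fix f`. -/

theorem Conway.fix_lift_map_comp_snd (Cw : Conway C) {A B X Y : C} (f : A ⨯ (X ⨯ Y) ⟶ X)
    (p : A ⟶ B) (g : B ⨯ Y ⟶ Y) :
    Cw.fix (prod.lift f (prod.map p prod.snd ≫ g)) ≫ prod.snd = p ≫ Cw.fix g := by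
  rw [Cw.bekic, prod.lift_snd, Cw.natural p g, ← Category.assoc]
  congr 2
  ext <;> simp only [prod.lift_map, prod.lift_fst, prod.lift_snd, prod.map_fst, prod.map_snd,
    Category.comp_id]

theorem DiffComb.cmap_comp_T_of_linear [∀ A B : C, AddCommMonoid (A ⟶ B)] (Dc : DiffComb C)
    {A X Y : C} (f : A ⨯ X ⟶ Y) (hf : Dc.D f = prod.snd ≫ f) :
    cmap A A X X ≫ Dc.T f =
      prod.lift (prod.map prod.fst prod.fst ≫ f) (prod.map prod.snd prod.snd ≫ f) := by
  simp [cmap, DiffComb.T, hf]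

/-- in a traced Cartesian differential category (Conway operator
satisfying the differential-fixpoint rule), the fixpoint of a linear map
(`D[f] = f ∘ π₂`) is linear. -/
theorem fix_of_linear_is_linear
    [∀ A B : C, AddCommMonoid (A ⟶ B)] [CartesianLeftAdditive C]
    (Dc : DiffComb C) (Cw : Conway C)
    (hdf : ∀ {A X : C} (f : A ⨯ X ⟶ X),
      Dc.D (Cw.fix f) = Cw.fix (cmap A A X X ≫ Dc.T f) ≫ prod.snd)
    {A X : C} (f : A ⨯ X ⟶ X) (hf : Dc.D f = prod.snd ≫ f) :
    Dc.D (Cw.fix f) = prod.snd ≫ Cw.fix f := by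
  rw [hdf, Dc.cmap_comp_T_of_linear f hf, Cw.fix_lift_map_comp_snd]
end

section
/- In a traced Cartesian differential category, if f : A×X → X is linear in its second argument (i.e. D[f] ∘ ⟨a,x,0,y⟩ = f ∘ ⟨a,y⟩), then fix(f) = 0. -/
open CategoryTheory CategoryTheory.Limits

universe v u

variable (C : Type u) [Category.{v} C] [HasFiniteProducts C]

variable {C}

/-!
By [CD.2], `D[fix f]` vanishes on the tangent vectors `(a, 0)`. By the differential fixpoint
rule, `D[fix f](a, 0)` is the second component of the fixpoint of
`(x, y) ↦ (f(a, x), D[f]((a, x), (0, y)))`, and linearity turns this map into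
`(x, y) ↦ (f(a, x), f(a, y))`, which acts on the two components independently. By Bekič's rule
its fixpoint is `(fix f, fix f)`, so `fix f = D[fix f](a, 0) = 0`.
-/

namespace Conway

theorem fix_lift_map_fst_map_snd (Cw : Conway C) {A X Y : C} (f : A ⨯ X ⟶ X) (g : A ⨯ Y ⟶ Y) :
    Cw.fix (prod.lift (prod.map (𝟙 A) prod.fst ≫ f) (prod.map (𝟙 A) prod.snd ≫ g)) =
      prod.lift (Cw.fix f) (Cw.fix g) := by
  have hfst : assoc3 A X Y ≫ prod.map (𝟙 A) prod.fst = prod.fst := by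
    ext <;> simp [assoc3, prod.lift_fst, prod.lift_snd]
  have hsnd (t : A ⟶ X) : prod.lift prod.fst (prod.lift (prod.fst ≫ t) prod.snd) ≫
      prod.map (𝟙 A) prod.snd = 𝟙 (A ⨯ Y) := by
    ext <;> simp [prod.lift_snd]
  rw [Cw.bekic, reassoc_of% hfst, reassoc_of% hsnd, prod.lift_fst_assoc, Category.id_comp]

end Conway

namespace DiffComb

variable [∀ A B : C, AddCommMonoid (A ⟶ B)] [CartesianLeftAdditive C]

theorem map_lift_id_zero_comp_cmap_comp_T (Dc : DiffComb C) {A X : C} (f : A ⨯ X ⟶ X)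
    (hf : ∀ {Z : C} (a : Z ⟶ A) (x y : Z ⟶ X),
      prod.lift (prod.lift a x) (prod.lift 0 y) ≫ Dc.D f = prod.lift a y ≫ f) :
    prod.map (prod.lift (𝟙 A) 0) (𝟙 (X ⨯ X)) ≫ cmap A A X X ≫ Dc.T f =
      prod.lift (prod.map (𝟙 A) prod.fst ≫ f) (prod.map (𝟙 A) prod.snd ≫ f) := by
  have hcmap : prod.map (prod.lift (𝟙 A) 0) (𝟙 (X ⨯ X)) ≫ cmap A A X X =
      prod.lift (prod.lift prod.fst (prod.snd ≫ prod.fst)) (prod.lift 0 (prod.snd ≫ prod.snd)) := by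
    ext <;> simp [cmap, prod.lift_fst, prod.lift_snd, CartesianLeftAdditive.comp_zero]
  rw [DiffComb.T, ← Category.assoc, hcmap, prod.comp_lift, prod.lift_fst_assoc, hf]
  congr 1 <;> congr 1 <;> ext <;> simp [prod.lift_fst, prod.lift_snd]

end DiffComb

/-- in a traced Cartesian differential category, if
`f : A ⨯ X ⟶ X` is linear in its second argument
(`D[f] ∘ ⟨a,x,0,y⟩ = f ∘ ⟨a,y⟩`), then `fix f = 0`. -/
theorem fix_of_linear_in_second_argument_is_zero
    [∀ A B : C, AddCommMonoid (A ⟶ B)] [CartesianLeftAdditive C]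
    (Dc : DiffComb C) (Cw : Conway C)
    (hdf : ∀ {A X : C} (f : A ⨯ X ⟶ X),
      Dc.D (Cw.fix f) = Cw.fix (cmap A A X X ≫ Dc.T f) ≫ prod.snd)
    {A X : C} (f : A ⨯ X ⟶ X)
    (hf : ∀ {Z : C} (a : Z ⟶ A) (x y : Z ⟶ X),
      prod.lift (prod.lift a x) (prod.lift 0 y) ≫ Dc.D f = prod.lift a y ≫ f) :
    Cw.fix f = 0 := by
  calc Cw.fix f
      = Cw.fix (prod.lift (prod.map (𝟙 A) prod.fst ≫ f) (prod.map (𝟙 A) prod.snd ≫ f)) ≫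
          prod.snd := by
        rw [Cw.fix_lift_map_fst_map_snd, prod.lift_snd]
    _ = (prod.lift (𝟙 A) 0 ≫ Cw.fix (cmap A A X X ≫ Dc.T f)) ≫ prod.snd := by
        rw [Cw.natural, Dc.map_lift_id_zero_comp_cmap_comp_T f hf]
    _ = 0 := by
        rw [Category.assoc, ← hdf, Dc.cd2_zero]
end

section
/- In a traced Cartesian differential category C, the subcategory LIN[C] of linear maps carries a repetition operator given by f* := fix(π₁ + f ∘ π₂); that is, f* satisfies: (1) f* = 1 + f ∘ f*; (2) (f+g)* = (f* ∘ g)* ∘ f*; (3) (f ∘ g)* ∘ f = f ∘ (g ∘ f)*, for all endomorphisms f, g : X → X in LIN[C]. -/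
open CategoryTheory CategoryTheory.Limits

universe v u

variable (C : Type u) [Category.{v} C] [HasFiniteProducts C]

variable {C}

/-- The repetition operator `f* = fix(π₁ + f ∘ π₂)` induced by a parametrized
fixpoint operator. -/
noncomputable def repStar [∀ A B : C, AddCommMonoid (A ⟶ B)] (P : ParamFix C)
    {X : C} (f : X ⟶ X) : X ⟶ X :=
  P.fix ((prod.fst : X ⨯ X ⟶ X) + (prod.snd : X ⨯ X ⟶ X) ≫ f)

/-!
Write `f* = fix(π₁ + f ∘ π₂)`, so that `y ≫ f*` is the fixpoint of `x ↦ y + x ≫ f`.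
The fixpoint axiom is `fix_eq`. Dinaturality of `*` is dinaturality of `fix` once the additive
map `f` is pulled out of `π₁ ≫ f + π₂ ≫ g ≫ f`. For the addition axiom, the diagonal identity
`fix_x fix_y (a + x g + y f) = fix_x (a + x (f + g))` of a Conway operator solves the inner
equation as `(a + x g) f*`; additivity of `f*` splits it into `a f* + x (g f*)`, whose fixpoint is
`a f* (g f*)*`. Additivity of `f*` comes from its linearity: by the differential-fixpoint rule,
the derivative of the fixpoint of a linear map is the fixpoint of two decoupled copies of it.
-/

namespace CategoryTheory.Limits

/-- The diagonal (double dagger) identity of a Conway operator. -/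
lemma Conway.fix_fix (Cw : Conway C) {A X : C} (k : (A ⨯ X) ⨯ X ⟶ X) :
    Cw.fix (Cw.fix k) = Cw.fix (prod.lift (𝟙 (A ⨯ X)) prod.snd ≫ k) := by
  set h := (prod.associator A X X).inv ≫ k
  have hk : assoc3 A X X ≫ h = k := (prod.associator A X X).hom_inv_id_assoc k
  have hdiag : prod.map (𝟙 A) (prod.lift (𝟙 X) (𝟙 X)) ≫ (prod.associator A X X).inv =
      prod.lift (𝟙 (A ⨯ X)) prod.snd := by
    apply prod.hom_ext
    · apply prod.hom_ext <;> simp [prod.lift_fst, prod.lift_snd]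
    · simp [prod.lift_snd]
  have hfst := congrArg (· ≫ prod.fst) (Cw.bekic h h)
  simp only [prod.lift_fst, hk, Cw.fix_eq] at hfst
  rw [← hfst, ← prod.comp_diag, Cw.dinat, ← Category.assoc, hdiag, Category.assoc, prod.lift_fst,
    Category.comp_id]

lemma Conway.fix_parallel_comp_snd (Cw : Conway C) {A B X Y : C} (k₁ : A ⨯ X ⟶ X)
    (k₂ : B ⨯ Y ⟶ Y) :
    Cw.fix (prod.lift (prod.map prod.fst prod.fst ≫ k₁) (prod.map prod.snd prod.snd ≫ k₂)) ≫
      prod.snd = prod.snd ≫ Cw.fix k₂ := by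
  rw [Cw.bekic, prod.lift_snd, Cw.natural prod.snd k₂, ← Category.assoc]
  congr 2
  apply prod.hom_ext <;> simp [prod.lift_fst, prod.lift_snd]

section Additive

variable [∀ A B : C, AddCommMonoid (A ⟶ B)]

def IsAdditive {X Y : C} (f : X ⟶ Y) : Prop :=
  ∀ {Z : C} (x y : Z ⟶ X), (x + y) ≫ f = x ≫ f + y ≫ f

def DiffComb.IsLinear (Dc : DiffComb C) {A B : C} (f : A ⟶ B) : Prop :=
  Dc.D f = prod.snd ≫ f

lemma DiffComb.IsLinear.isAdditive {Dc : DiffComb C} {A B : C} {f : A ⟶ B}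
    (hf : Dc.IsLinear f) : IsAdditive f := by
  intro Z y z
  have hD : Dc.D f = prod.snd ≫ f := hf
  simpa only [hD, prod.lift_snd_assoc] using Dc.cd2_add f y y z

variable [CartesianLeftAdditive C]

open CartesianLeftAdditive

lemma comp_repStar_eq_fix (P : ParamFix C) {A X : C} (y : A ⟶ X) (f : X ⟶ X) :
    y ≫ repStar P f = P.fix (prod.fst ≫ y + prod.snd ≫ f) := by
  rw [repStar, P.natural, comp_add, prod.map_fst, prod.map_snd_assoc, Category.id_comp]

lemma repStar_eq_id_add (P : ParamFix C) {X : C} (f : X ⟶ X) :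
    repStar P f = 𝟙 X + repStar P f ≫ f := by
  conv_lhs => rw [repStar, ← P.fix_eq]
  rw [comp_add, prod.lift_fst, prod.lift_snd_assoc, repStar]

lemma repStar_dinat (Cw : Conway C) {X : C} (f g : X ⟶ X) (hf : IsAdditive f) :
    f ≫ repStar Cw.toParamFix (g ≫ f) = repStar Cw.toParamFix (f ≫ g) ≫ f := by
  calc f ≫ repStar Cw.toParamFix (g ≫ f)
      = Cw.fix ((prod.fst + prod.snd ≫ g) ≫ f) := by
        rw [comp_repStar_eq_fix, hf, Category.assoc]
    _ = Cw.fix (prod.fst + prod.snd ≫ f ≫ g) ≫ f := by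
        rw [Cw.dinat, comp_add, prod.map_fst, prod.map_snd_assoc, Category.comp_id]
    _ = repStar Cw.toParamFix (f ≫ g) ≫ f := rfl

lemma repStar_add (Cw : Conway C) {X : C} (f g : X ⟶ X)
    (hf : IsAdditive (repStar Cw.toParamFix f)) :
    repStar Cw.toParamFix (f + g) =
      repStar Cw.toParamFix f ≫ repStar Cw.toParamFix (g ≫ repStar Cw.toParamFix f) := by
  have hdiag : prod.lift (𝟙 (X ⨯ X)) prod.snd ≫
      (prod.fst ≫ (prod.fst + prod.snd ≫ g) + prod.snd ≫ f) = prod.fst + prod.snd ≫ (f + g) := by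
    simp only [comp_add, prod.lift_fst_assoc, prod.lift_snd_assoc, Category.id_comp]
    abel
  rw [repStar, ← hdiag, ← Cw.fix_fix, ← comp_repStar_eq_fix _ (prod.fst + prod.snd ≫ g), hf,
    Category.assoc, ← comp_repStar_eq_fix]

end Additive

section Linear

variable [∀ A B : C, AddCommMonoid (A ⟶ B)] {Dc : DiffComb C}

lemma DiffComb.isLinear_fst {A B : C} : Dc.IsLinear (prod.fst : A ⨯ B ⟶ A) :=
  Dc.cd3_fst

lemma DiffComb.isLinear_snd {A B : C} : Dc.IsLinear (prod.snd : A ⨯ B ⟶ B) :=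
  Dc.cd3_snd

lemma DiffComb.IsLinear.add [CartesianLeftAdditive C] {A B : C} {f g : A ⟶ B}
    (hf : Dc.IsLinear f) (hg : Dc.IsLinear g) : Dc.IsLinear (f + g) := by
  rw [DiffComb.IsLinear, Dc.cd1_add, hf, hg, CartesianLeftAdditive.comp_add]

lemma DiffComb.IsLinear.comp {A B E : C} {f : A ⟶ B} {g : B ⟶ E} (hf : Dc.IsLinear f)
    (hg : Dc.IsLinear g) : Dc.IsLinear (f ≫ g) := by
  rw [DiffComb.IsLinear, Dc.cd5, hf, hg, prod.lift_snd_assoc, Category.assoc]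

lemma DiffComb.IsLinear.cmap_comp_T {A X : C} {k : A ⨯ X ⟶ X} (hk : Dc.IsLinear k) :
    cmap A A X X ≫ Dc.T k =
      prod.lift (prod.map prod.fst prod.fst ≫ k) (prod.map prod.snd prod.snd ≫ k) := by
  rw [DiffComb.T, hk]
  ext <;> simp [cmap]

lemma DiffComb.IsLinear.fix (Cw : Conway C)
    (hdf : ∀ {A X : C} (f : A ⨯ X ⟶ X),
      Dc.D (Cw.fix f) = Cw.fix (cmap A A X X ≫ Dc.T f) ≫ prod.snd)
    {A X : C} {k : A ⨯ X ⟶ X} (hk : Dc.IsLinear k) : Dc.IsLinear (Cw.fix k) := by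
  rw [DiffComb.IsLinear, hdf, hk.cmap_comp_T, Cw.fix_parallel_comp_snd]

lemma DiffComb.IsLinear.repStar [CartesianLeftAdditive C] (Cw : Conway C)
    (hdf : ∀ {A X : C} (f : A ⨯ X ⟶ X),
      Dc.D (Cw.fix f) = Cw.fix (cmap A A X X ≫ Dc.T f) ≫ prod.snd)
    {X : C} {f : X ⟶ X} (hf : Dc.IsLinear f) : Dc.IsLinear (repStar Cw.toParamFix f) :=
  (isLinear_fst.add (isLinear_snd.comp hf)).fix Cw hdf

end Linear

end CategoryTheory.Limits

/-- in a traced Cartesian differential category, `f* := fix(π₁ + f∘π₂)`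
is a repetition operator on the subcategory of linear maps: it maps linear maps to
linear maps and satisfies the fixpoint, addition and dinaturality axioms. -/
theorem repetition_operator_on_linear_maps
    [∀ A B : C, AddCommMonoid (A ⟶ B)] [CartesianLeftAdditive C]
    (Dc : DiffComb C) (Cw : Conway C)
    (hdf : ∀ {A X : C} (f : A ⨯ X ⟶ X),
      Dc.D (Cw.fix f) = Cw.fix (cmap A A X X ≫ Dc.T f) ≫ prod.snd)
    {X : C} (f g : X ⟶ X)
    (hf : Dc.D f = prod.snd ≫ f) (hg : Dc.D g = prod.snd ≫ g) :
    (Dc.D (repStar Cw.toParamFix f) = prod.snd ≫ repStar Cw.toParamFix f) ∧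
    (repStar Cw.toParamFix f = 𝟙 X + repStar Cw.toParamFix f ≫ f) ∧
    (repStar Cw.toParamFix (f + g) =
      repStar Cw.toParamFix f ≫ repStar Cw.toParamFix (g ≫ repStar Cw.toParamFix f)) ∧
    (f ≫ repStar Cw.toParamFix (g ≫ f) = repStar Cw.toParamFix (f ≫ g) ≫ f) := by
  have hf : Dc.IsLinear f := hf
  have hfs := hf.repStar Cw hdf
  exact ⟨hfs, repStar_eq_id_add _ f, repStar_add Cw f g hfs.isAdditive,
    repStar_dinat Cw f g hf.isAdditive⟩
end

section
/- A Cartesian differential category with a Conway operator is a traced Cartesian differential category if and only if the induced trace operator Tr (defined by Tr(⟨f₁,f₂⟩)(a) = f₁(a, μx.f₂(a,x))) commutes with the tangent bundle functor up to the middle-swap isomorphism: T(Tr(f)) = Tr(c ∘ T(f) ∘ c) for every f : A×X → B×X. -/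
open CategoryTheory CategoryTheory.Limits

universe v u

variable (C : Type u) [Category.{v} C] [HasFiniteProducts C]

variable {C}

/-- The trace operator induced by a Conway operator:
`Tr(⟨f₁,f₂⟩) = f₁ ∘ ⟨1, fix f₂⟩`. -/
noncomputable def trOf (P : ParamFix C) {A B X : C} (f : A ⨯ X ⟶ B ⨯ X) : A ⟶ B :=
  prod.lift (𝟙 A) (P.fix (f ≫ prod.snd)) ≫ f ≫ prod.fst

/-!
The differential-fixpoint rule `D[fix f] = π₂ ∘ fix(c ∘ T f)` is equivalent to the
tangent-fixpoint rule `T(fix f) = fix(c ∘ T f)`: the first components agree for any Conway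
operator, by Bekič's rule, because `c ∘ T f` computes its first component from first
components only. Since `T` preserves pairing up to `c`, `T(Tr f)` then unfolds to
`Tr(c ∘ T f ∘ c)`. Conversely, `fix f = Tr ⟨f, f⟩`, so commutation of the trace with `T`
at `⟨f, f⟩` is exactly the tangent-fixpoint rule for `f`.
-/

attribute [local simp] prod.lift_fst prod.lift_snd prod.lift_fst_assoc prod.lift_snd_assoc

lemma lift_comp_fst_comp_snd {W X Y : C} (f : W ⟶ X ⨯ Y) :
    prod.lift (f ≫ prod.fst) (f ≫ prod.snd) = f := by
  ext <;> simp

section Trace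

variable (P : ParamFix C)

lemma trOf_lift {A B X : C} (f₁ : A ⨯ X ⟶ B) (f₂ : A ⨯ X ⟶ X) :
    trOf P (prod.lift f₁ f₂) = prod.lift (𝟙 A) (P.fix f₂) ≫ f₁ := by
  simp only [trOf, prod.lift_fst, prod.lift_snd]

lemma trOf_lift_self {A X : C} (f : A ⨯ X ⟶ X) : trOf P (prod.lift f f) = P.fix f := by
  rw [trOf_lift, P.fix_eq]

end Trace

namespace DiffComb

variable [∀ A B : C, AddCommMonoid (A ⟶ B)] (Dc : DiffComb C)

@[simp]
lemma T_fst {A B : C} (f : A ⟶ B) : Dc.T f ≫ prod.fst = prod.fst ≫ f :=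
  prod.lift_fst _ _

@[simp]
lemma T_snd {A B : C} (f : A ⟶ B) : Dc.T f ≫ prod.snd = Dc.D f :=
  prod.lift_snd _ _

lemma T_comp {A B E : C} (f : A ⟶ B) (g : B ⟶ E) :
    Dc.T (f ≫ g) = Dc.T f ≫ Dc.T g := by
  ext <;> simp [DiffComb.T, Dc.cd5]

lemma T_lift_comp_cmap {A B B' : C} (f : A ⟶ B) (g : A ⟶ B') :
    Dc.T (prod.lift f g) ≫ cmap B B' B B' = prod.lift (Dc.T f) (Dc.T g) := by
  ext <;> simp [DiffComb.T, cmap, Dc.cd4]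

lemma T_lift_id {A X : C} (g : A ⟶ X) :
    Dc.T (prod.lift (𝟙 A) g) = prod.lift (𝟙 (A ⨯ A)) (Dc.T g) ≫ cmap A A X X := by
  ext <;> simp [DiffComb.T, cmap, Dc.cd4, Dc.cd3_id]

lemma cmap_comp_T_comp_cmap {A B X : C} (f : A ⨯ X ⟶ B ⨯ X) :
    cmap A A X X ≫ Dc.T f ≫ cmap B X B X =
      prod.lift (cmap A A X X ≫ Dc.T (f ≫ prod.fst)) (cmap A A X X ≫ Dc.T (f ≫ prod.snd)) := by
  conv_lhs => rw [← lift_comp_fst_comp_snd f, T_lift_comp_cmap]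
  rw [prod.comp_lift]

end DiffComb

lemma Conway.fix_comp_fst (Cw : Conway C) {P A X Y : C} (p : P ⟶ A) (f : A ⨯ X ⟶ X)
    (w : P ⨯ (X ⨯ Y) ⟶ X ⨯ Y) (hw : w ≫ prod.fst = prod.map p prod.fst ≫ f) :
    Cw.fix w ≫ prod.fst = p ≫ Cw.fix f := by
  rw [← lift_comp_fst_comp_snd w, Cw.bekic, prod.lift_fst, hw, Cw.natural]
  congr 1
  simp only [← Category.assoc]
  congr 1
  ext <;> simp [assoc3]

lemma fix_cmap_comp_T_eq_T_fix [∀ A B : C, AddCommMonoid (A ⟶ B)] (Dc : DiffComb C)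
    (Cw : Conway C) {A X : C} (f : A ⨯ X ⟶ X)
    (hf : Dc.D (Cw.fix f) = Cw.fix (cmap A A X X ≫ Dc.T f) ≫ prod.snd) :
    Cw.fix (cmap A A X X ≫ Dc.T f) = Dc.T (Cw.fix f) := by
  ext
  · rw [Cw.fix_comp_fst prod.fst f _ (by simp [cmap, DiffComb.T]), Dc.T_fst]
  · rw [Dc.T_snd, hf]

/-- a Cartesian differential category with a Conway operator is a
traced Cartesian differential category (i.e. satisfies the differential-fixpoint
rule) if and only if the induced trace operator commutes with the tangent bundle
functor up to the middle-swap isomorphism: `T(Tr f) = Tr(c ∘ T f ∘ c)`. -/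
theorem traced_iff_trace_commutes_with_tangent
    [∀ A B : C, AddCommMonoid (A ⟶ B)] [CartesianLeftAdditive C]
    (Dc : DiffComb C) (Cw : Conway C) :
    (∀ {A X : C} (f : A ⨯ X ⟶ X),
      Dc.D (Cw.fix f) = Cw.fix (cmap A A X X ≫ Dc.T f) ≫ prod.snd) ↔
    (∀ {A B X : C} (f : A ⨯ X ⟶ B ⨯ X),
      Dc.T (trOf Cw.toParamFix f) =
        trOf Cw.toParamFix (cmap A A X X ≫ Dc.T f ≫ cmap B X B X)) := by
  constructor
  · intro hfix A B X f
    rw [Dc.cmap_comp_T_comp_cmap, trOf_lift, fix_cmap_comp_T_eq_T_fix Dc Cw _ (hfix _),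
      ← Category.assoc, ← Dc.T_lift_id, ← Dc.T_comp]
    rfl
  · intro htr A X f
    have htr_diag := htr (prod.lift f f)
    rw [Dc.cmap_comp_T_comp_cmap, prod.lift_fst, prod.lift_snd, trOf_lift_self,
      trOf_lift_self] at htr_diag
    rw [← Dc.T_snd, htr_diag]
end

section
/- Any category with finite biproducts equipped with a Conway operator, viewed as a Cartesian differential category with differential combinator D[f] = f ∘ π₂, satisfies the strong differential-fixpoint rule; hence it is a traced Cartesian differential category. -/
open CategoryTheory CategoryTheory.Limits

universe v u

variable (C : Type u) [Category.{v} C] [HasFiniteProducts C]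

variable {C}

/-- a category with finite biproducts (all maps additive) with a
Conway operator, viewed as a Cartesian differential category via
`D[f] = f ∘ π₂`, satisfies the strong differential-fixpoint rule. -/
theorem biproduct_conway_strong_diff_fix
    [∀ A B : C, AddCommMonoid (A ⟶ B)] [CartesianLeftAdditive C]
    (hadd : ∀ {X A B : C} (x y : X ⟶ A) (f : A ⟶ B), (x + y) ≫ f = x ≫ f + y ≫ f)
    (hzero : ∀ {X A B : C} (f : A ⟶ B), (0 : X ⟶ A) ≫ f = 0)
    (Cw : Conway C) :
    ∀ {A X : C} (f : A ⨯ X ⟶ X),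
      prod.snd ≫ Cw.fix f =
        Cw.fix (prod.lift
          (prod.lift ((prod.fst : (A ⨯ A) ⨯ X ⟶ A ⨯ A) ≫ prod.fst)
            ((prod.fst : (A ⨯ A) ⨯ X ⟶ A ⨯ A) ≫ prod.fst ≫ Cw.fix f))
          (prod.lift ((prod.fst : (A ⨯ A) ⨯ X ⟶ A ⨯ A) ≫ prod.snd)
            (prod.snd : (A ⨯ A) ⨯ X ⟶ X)) ≫ prod.snd ≫ f) := by
  intro A X f
  -- `D[f] = π₂ ≫ f` discards the base point, so the rule is naturality of `fix` along `π₂`.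
  rw [Cw.natural, ← Category.assoc, prod.lift_snd, ← prod.lift_fst_comp_snd_comp,
    Category.comp_id]
end

section
/- Let C and S be categories with finite products and J : S → C a bijective-on-objects strict-product-preserving functor, and suppose C has a J-uniform parametrized fixpoint operator. If C is moreover a category with finite biproducts regarded as a Cartesian differential category via D[f] = f ∘ π₂, and all projection maps are strict with respect to fix, then the differential-fixpoint rule holds. -/
/-!
By naturality, precomposing a fixpoint with `π₂` gives the fixpoint of `f ∘ (π₂ × 1)`.
Since `π₂ ∘ T(f) ∘ c = f ∘ (π₂ × π₂)`, the projection `π₂` carries the tangent iteration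
`T(f) ∘ c` to that of `f ∘ (π₂ × 1)`, and strictness of `π₂` identifies the two fixpoints.
-/

open CategoryTheory CategoryTheory.Limits

universe v u

variable (C : Type u) [Category.{v} C] [HasFiniteProducts C]

variable {C}

/-- A map `h` is strict with respect to a parametrized fixpoint operator. -/
def StrictMap (P : ParamFix C) {X Y : C} (h : X ⟶ Y) : Prop :=
  ∀ {A : C} (f : A ⨯ X ⟶ X) (g : A ⨯ Y ⟶ Y),
    f ≫ h = prod.map (𝟙 A) h ≫ g → P.fix f ≫ h = P.fix g

universe v₂ u₂

theorem ParamFix.comp_fix_eq_fix_comp_of_strict (P : ParamFix C) {A B X Y : C}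
    {h : Y ⟶ X} (hh : StrictMap P h) (k : B ⟶ A) (f : A ⨯ X ⟶ X) (g : B ⨯ Y ⟶ Y)
    (hfg : g ≫ h = prod.map k h ≫ f) :
    k ≫ P.fix f = P.fix g ≫ h := by
  rw [P.natural]
  refine (hh g _ ?_).symm
  rw [hfg, prod.map_map_assoc, Category.id_comp, Category.comp_id]

theorem cmap_snd (A B X Y : C) :
    cmap A B X Y ≫ prod.snd = prod.map prod.snd prod.snd :=
  prod.lift_snd _ _

/-- let `J : S ⥤ C` be a bijective-on-objects finite-product
preserving functor and `fix` a `J`-uniform parametrized fixpoint operator on `C`.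
If `C` has finite biproducts, regarded as a Cartesian differential category via
`D[f] = f ∘ π₂`, and all projections are strict, then the differential-fixpoint
rule holds. -/
theorem uniform_biproduct_diff_fix
    {S : Type u₂} [Category.{v₂} S] [HasFiniteProducts S]
    (J : S ⥤ C) (hJbij : Function.Bijective J.obj)
    [PreservesFiniteProducts J]
    [∀ A B : C, AddCommMonoid (A ⟶ B)] [CartesianLeftAdditive C]
    (hadd : ∀ {X A B : C} (x y : X ⟶ A) (f : A ⟶ B), (x + y) ≫ f = x ≫ f + y ≫ f)
    (hzero : ∀ {X A B : C} (f : A ⟶ B), (0 : X ⟶ A) ≫ f = 0)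
    (P : ParamFix C)
    (huniform : ∀ {X Y : S} (h : X ⟶ Y), StrictMap P (J.map h))
    (hfst : ∀ A B : C, StrictMap P (prod.fst : A ⨯ B ⟶ A))
    (hsnd : ∀ A B : C, StrictMap P (prod.snd : A ⨯ B ⟶ B)) :
    ∀ {A X : C} (f : A ⨯ X ⟶ X),
      prod.snd ≫ P.fix f =
        P.fix (cmap A A X X ≫ prod.lift (prod.fst ≫ f) (prod.snd ≫ f)) ≫
          prod.snd := by
  intro A X f
  refine P.comp_fix_eq_fix_comp_of_strict (hsnd X X) prod.snd f _ ?_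
  simp only [Category.assoc, prod.lift_snd, reassoc_of% cmap_snd]
end

section
/- In a complete semiring, if j is nilpotent (there exists p ≥ 1 with j^p = 0) and ⊖ is truncated subtraction satisfying the Galois property, then for all k: k ≤ j* · (k ⊖ j·k), where j* = Σ_{i<p} j^i. -/
/-- in a complete semiring, if `j` is nilpotent (`j^p = 0` with
`p ≥ 1`) and `⊖` is a truncated subtraction, then for all `k`,
`k ≤ j* · (k ⊖ j·k)` where `j* = Σ_{i<p} j^i`. -/
theorem nilpotent_star_recovers {S : Type*} [Semiring S] [PartialOrder S]
    [CovariantClass S S (· + ·) (· ≤ ·)]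
    [CovariantClass S S (· * ·) (· ≤ ·)]
    [CovariantClass S S (Function.swap (· * ·)) (· ≤ ·)]
    (sub : S → S → S)
    (hgalois : ∀ f g h : S, sub f g ≤ h ↔ f ≤ g + h)
    (j : S) (p : ℕ) (hp : 1 ≤ p) (hnil : j ^ p = 0) :
    ∀ k : S, k ≤ (∑ i ∈ Finset.range p, j ^ i) * sub k (j * k) := by
  intro k
  set d := sub k (j * k) with hd
  have hk : k ≤ j * k + d := (hgalois k (j * k) d).mp le_rfl
  have key : ∀ n : ℕ, k ≤ j ^ n * k + (∑ i ∈ Finset.range n, j ^ i) * d := by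
    intro n
    induction n with
    | zero => simp
    | succ n ih =>
      calc k ≤ j ^ n * k + (∑ i ∈ Finset.range n, j ^ i) * d := ih
        _ ≤ j ^ n * (j * k + d) + (∑ i ∈ Finset.range n, j ^ i) * d := by
            gcongr
        _ = j ^ (n + 1) * k + (∑ i ∈ Finset.range (n + 1), j ^ i) * d := by
            rw [Finset.sum_range_succ, mul_add, add_mul, pow_succ]
            rw [mul_assoc, add_assoc, add_comm (j ^ n * d)]
  have := key p
  rwa [hnil, zero_mul, zero_add] at this
end

section
/- Let N be the Newton approximant chain for a Scott-continuous function f on a complete semiring with truncated subtraction and a Taylor expansion property f(a+b) ≥ f(a) + f'(a)·b: define z_0 = 0 and z_{n+1} = z_n + (f'(z_n))* · (f(z_n) ⊖ z_n), where (·)* is the Kleene star. Then for all n: (1) z_n ≤ f(z_n); (2) f(z_n) ≤ z_{n+1}; (3) the Scott approximants satisfy y_n ≤ z_n where y_0 = 0, y_{n+1} = f(y_n); (4) z_n ≤ y, where y is the least fixpoint of f. Hence the Newton chain is increasing and converges to the least fixpoint from below. -/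
/-- Finite approximants of the Kleene star. -/
def starN {S : Type*} [Semiring S] (a : S) : ℕ → S
  | 0 => 0
  | n + 1 => 1 + a * starN a n

/-- The Kleene star `a* = ⨆ n, a^{*_n}`. -/
noncomputable def kstar {S : Type*} [Semiring S] [CompleteLattice S] (a : S) : S :=
  ⨆ n, starN a n

/-- The Newton approximants: `z_0 = 0`,
`z_{n+1} = z_n + (f'(z_n))* · (f(z_n) ⊖ z_n)`. -/
noncomputable def newtonZ {S : Type*} [Semiring S] [CompleteLattice S]
    (f df : S → S) (sub : S → S → S) : ℕ → S
  | 0 => 0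
  | n + 1 =>
      newtonZ f df sub n +
        kstar (df (newtonZ f df sub n)) *
          sub (f (newtonZ f df sub n)) (newtonZ f df sub n)

/-! Write `d = f'(z)` and `s = f z ⊖ z`. When `z ≤ f z` we have `s + z = f z`, hence
`z + (1 + d c) s = f z + d (c s) ≤ f (z + c s)` by the sub-Taylor inequality. With `c = d*` and
`d* = 1 + d d*` this makes the next Newton iterate a post-fixed point again, lying above `f z`
since `1 ≤ d*`. With `c = d^{*_k}`, induction on `k` keeps `z + d^{*_k} s` below every fixed point
above `z`, and Scott continuity passes this to `d*`. By monotonicity of `f` the Newton iterates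
dominate the Kleene iterates `f^[n] 0`, whose supremum is the least fixed point. -/

theorem add_one_add_mul_mul_eq {S : Type*} [Semiring S] {z s w : S} (hs : s + z = w) (d c : S) :
    z + (1 + d * c) * s = w + d * (c * s) := by
  rw [add_mul, one_mul, mul_assoc, ← add_assoc, add_comm z s, hs]

section KleeneStar

variable {S : Type*} [Semiring S] [CompleteLattice S]

theorem one_le_kstar' (a : S) : 1 ≤ kstar a := by
  simpa [starN, kstar] using le_iSup (starN a) 1

variable [AddLeftMono S] [MulLeftMono S]

theorem monotone_starN (hbot : ∀ s : S, 0 ≤ s) (a : S) : Monotone (starN a) := by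
  refine monotone_nat_of_le_succ fun n => ?_
  induction n with
  | zero => exact hbot _
  | succ n ih => exact add_le_add_right (mul_le_mul_right ih a) 1

theorem kstar_eq_one_add_mul (hbot : ∀ s : S, 0 ≤ s)
    (hmulsup : ∀ (a : S) (g : ℕ → S), Monotone g → a * (⨆ n, g n) = ⨆ n, a * g n)
    (haddsup : ∀ (a : S) (g : ℕ → S), Monotone g → a + (⨆ n, g n) = ⨆ n, a + g n)
    (a : S) : kstar a = 1 + a * kstar a := by
  have hmono := monotone_starN hbot a
  rw [kstar, hmulsup a _ hmono, haddsup 1 _ fun m n h => mul_le_mul_right (hmono h) a]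
  apply le_antisymm
  · exact iSup_le fun n =>
      (hmono n.le_succ).trans (le_iSup (fun n => 1 + a * starN a n) n)
  · exact iSup_le fun n => le_iSup (starN a) (n + 1)

theorem add_kstar_mul_eq_iSup [MulRightMono S] (hbot : ∀ s : S, 0 ≤ s)
    (hsupmul : ∀ (a : S) (g : ℕ → S), Monotone g → (⨆ n, g n) * a = ⨆ n, g n * a)
    (haddsup : ∀ (a : S) (g : ℕ → S), Monotone g → a + (⨆ n, g n) = ⨆ n, a + g n)
    (z a s : S) : z + kstar a * s = ⨆ k, z + starN a k * s := by
  have hmono := monotone_starN hbot a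
  rw [kstar, hsupmul s _ hmono, haddsup z _ fun m n h => mul_le_mul_left (hmono h) s]

end KleeneStar

section NewtonStep

variable {S : Type*} [Semiring S] [CompleteLattice S] [AddLeftMono S] [MulLeftMono S]
  {f df : S → S} {sub : S → S → S} {z : S}

theorem le_apply_newton_step (hbot : ∀ s : S, 0 ≤ s)
    (hmulsup : ∀ (a : S) (g : ℕ → S), Monotone g → a * (⨆ n, g n) = ⨆ n, a * g n)
    (haddsup : ∀ (a : S) (g : ℕ → S), Monotone g → a + (⨆ n, g n) = ⨆ n, a + g n)
    (htaylor : ∀ a b : S, f a + df a * b ≤ f (a + b)) (hs : sub (f z) z + z = f z) :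
    z + kstar (df z) * sub (f z) z ≤ f (z + kstar (df z) * sub (f z) z) :=
  calc z + kstar (df z) * sub (f z) z
      = z + (1 + df z * kstar (df z)) * sub (f z) z := by
        rw [← kstar_eq_one_add_mul hbot hmulsup haddsup]
    _ = f z + df z * (kstar (df z) * sub (f z) z) := add_one_add_mul_mul_eq hs _ _
    _ ≤ f (z + kstar (df z) * sub (f z) z) := htaylor z _

omit [MulLeftMono S] in
theorem apply_le_newton_step [MulRightMono S] (hs : sub (f z) z + z = f z) :
    f z ≤ z + kstar (df z) * sub (f z) z :=
  calc f z = z + 1 * sub (f z) z := by rw [one_mul, add_comm, hs]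
    _ ≤ z + kstar (df z) * sub (f z) z :=
        add_le_add_right (mul_le_mul_left (one_le_kstar' _) _) z

theorem newton_step_le_of_isFixedPt [MulRightMono S] {y : S} (hbot : ∀ s : S, 0 ≤ s)
    (hsupmul : ∀ (a : S) (g : ℕ → S), Monotone g → (⨆ n, g n) * a = ⨆ n, g n * a)
    (haddsup : ∀ (a : S) (g : ℕ → S), Monotone g → a + (⨆ n, g n) = ⨆ n, a + g n)
    (hmono : Monotone f) (htaylor : ∀ a b : S, f a + df a * b ≤ f (a + b))
    (hyfix : f y = y) (hs : sub (f z) z + z = f z) (hzy : z ≤ y) :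
    z + kstar (df z) * sub (f z) z ≤ y := by
  rw [add_kstar_mul_eq_iSup hbot hsupmul haddsup]
  refine iSup_le fun k => ?_
  induction k with
  | zero => simpa [starN] using hzy
  | succ k ih =>
    calc z + starN (df z) (k + 1) * sub (f z) z
        = f z + df z * (starN (df z) k * sub (f z) z) := add_one_add_mul_mul_eq hs _ _
      _ ≤ f (z + starN (df z) k * sub (f z) z) := htaylor z _
      _ ≤ f y := hmono ih
      _ = y := hyfix

end NewtonStep

theorem newton_approximants_converge_general {S : Type*} [Semiring S] [CompleteLattice S]
    [CovariantClass S S (· + ·) (· ≤ ·)]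
    [CovariantClass S S (· * ·) (· ≤ ·)]
    [CovariantClass S S (Function.swap (· * ·)) (· ≤ ·)]
    (f df : S → S) (sub : S → S → S) (y : S)
    (hbot : ∀ s : S, (0 : S) ≤ s)
    (hsub_add : ∀ a b : S, b ≤ a → sub a b + b = a)
    (hmono : Monotone f)
    (htaylor : ∀ a b : S, f a + df a * b ≤ f (a + b))
    (hmulsup : ∀ (a : S) (g : ℕ → S), Monotone g → a * (⨆ n, g n) = ⨆ n, a * g n)
    (hsupmul : ∀ (a : S) (g : ℕ → S), Monotone g → (⨆ n, g n) * a = ⨆ n, g n * a)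
    (haddsup : ∀ (a : S) (g : ℕ → S), Monotone g → a + (⨆ n, g n) = ⨆ n, a + g n)
    (hyfix : f y = y)
    (hysup : y = ⨆ n, f^[n] 0) :
    (∀ n, newtonZ f df sub n ≤ f (newtonZ f df sub n)) ∧
    (∀ n, f (newtonZ f df sub n) ≤ newtonZ f df sub (n + 1)) ∧
    (∀ n, f^[n] 0 ≤ newtonZ f df sub n) ∧
    (∀ n, newtonZ f df sub n ≤ y) ∧
    (∀ n, newtonZ f df sub n ≤ newtonZ f df sub (n + 1)) ∧
    (⨆ n, newtonZ f df sub n) = y := by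
  have h_post : ∀ n, newtonZ f df sub n ≤ f (newtonZ f df sub n) := by
    intro n
    induction n with
    | zero => exact hbot _
    | succ n ih => exact le_apply_newton_step hbot hmulsup haddsup htaylor (hsub_add _ _ ih)
  have h_step : ∀ n, f (newtonZ f df sub n) ≤ newtonZ f df sub (n + 1) :=
    fun n => apply_le_newton_step (hsub_add _ _ (h_post n))
  have h_kleene : ∀ n, f^[n] 0 ≤ newtonZ f df sub n := by
    intro n
    induction n with
    | zero => exact le_rfl
    | succ n ih => exact (Function.iterate_succ_apply' f n 0).trans_le ((hmono ih).trans (h_step n))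
  have h_le_y : ∀ n, newtonZ f df sub n ≤ y := by
    intro n
    induction n with
    | zero => exact hbot y
    | succ n ih =>
      exact newton_step_le_of_isFixedPt hbot hsupmul haddsup hmono htaylor hyfix
        (hsub_add _ _ (h_post n)) ih
  refine ⟨h_post, h_step, h_kleene, h_le_y, fun n => (h_post n).trans (h_step n), ?_⟩
  exact le_antisymm (iSup_le h_le_y) (hysup.trans_le (iSup_mono h_kleene))

/-- in a complete semiring with truncated subtraction and the
sub-Taylor property `f(a) + f'(a)·b ≤ f(a+b)`, the Newton approximants form an
increasing chain satisfying `z_n ≤ f(z_n) ≤ z_{n+1}`, dominating the Scott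
approximants `f^n(0)` and bounded by the least fixpoint `y`, and they converge
to `y` from below. -/
theorem newton_approximants_converge {S : Type*} [Semiring S] [CompleteLattice S]
    [CovariantClass S S (· + ·) (· ≤ ·)]
    [CovariantClass S S (· * ·) (· ≤ ·)]
    [CovariantClass S S (Function.swap (· * ·)) (· ≤ ·)]
    (f df : S → S) (sub : S → S → S) (y : S)
    (hbot : ∀ s : S, (0 : S) ≤ s)
    (hgalois : ∀ a b c : S, sub a b ≤ c ↔ a ≤ b + c)
    (hsub_add : ∀ a b : S, b ≤ a → sub a b + b = a)
    (hmono : Monotone f)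
    (htaylor : ∀ a b : S, f a + df a * b ≤ f (a + b))
    (hmulsup : ∀ (a : S) (g : ℕ → S), Monotone g → a * (⨆ n, g n) = ⨆ n, a * g n)
    (hsupmul : ∀ (a : S) (g : ℕ → S), Monotone g → (⨆ n, g n) * a = ⨆ n, g n * a)
    (haddsup : ∀ (a : S) (g : ℕ → S), Monotone g → a + (⨆ n, g n) = ⨆ n, a + g n)
    (hyfix : f y = y)
    (hysup : y = ⨆ n, f^[n] 0) :
    (∀ n, newtonZ f df sub n ≤ f (newtonZ f df sub n)) ∧
    (∀ n, f (newtonZ f df sub n) ≤ newtonZ f df sub (n + 1)) ∧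
    (∀ n, f^[n] 0 ≤ newtonZ f df sub n) ∧
    (∀ n, newtonZ f df sub n ≤ y) ∧
    (∀ n, newtonZ f df sub n ≤ newtonZ f df sub (n + 1)) ∧
    (⨆ n, newtonZ f df sub n) = y :=
  newton_approximants_converge_general f df sub y hbot hsub_add hmono htaylor hmulsup hsupmul
    haddsup hyfix hysup
end
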